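/- Let a continuous-time query algorithm of duration T be given as in the context, and define the Gram matrices ρ_{x,y} = ⟨φ_x(0)|φ_y(0)⟩ and σ_{x,y} = ⟨φ_x(T)|φ_y(T)⟩ of the initial and final states. Then for every Hermitian 𝕏×𝕏 matrix Γ satisfying ‖Γ∘Δ_j‖ ≤ 1 for all j ∈ {1,…,n}, and every unit vector v ∈ ℂ^𝕏, one has |⟨Γ∘(σ−ρ), vv*⟩| ≤ 2T, where ⟨A,B⟩ = tr(A*B). (Consequently the duration of any exact continuous-time conversion of ρ to σ is at least half the adversary bound Adv*(ρ,σ).) -/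

import Mathlib

open scoped Matrix ComplexConjugate

/-- The operator (spectral) norm of a complex matrix. -/
noncomputable def matOpNorm {m : Type*} [Fintype m] [DecidableEq m]
    (M : Matrix m m ℂ) : ℝ :=
  ‖Matrix.toEuclideanCLM (𝕜 := ℂ) M‖

/-- The adversary constraint matrix `Δ_j`, with entries `(Δ_j)_{x,y} = 1 - δ_{x_j,y_j}`. -/
def Delta {X Al : Type*} [DecidableEq Al] {n : ℕ} (inp : X → Fin n → Al) (j : Fin n) :
    Matrix X X ℂ :=
  fun x y => if inp x j = inp y j then 0 else 1

/-- The oracle Hamiltonian `H_Q(x) = ∑_j |j⟩⟨j| ⊗ h(x_j) ⊗ I_W` as a matrix on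
`ℂ^n ⊗ ℂ^{Σ∪{0̄}} ⊗ H_W`, where the blank symbol `0̄` is `Option.none`. -/
def oracleHam {X Al W : Type*} {n : ℕ} [DecidableEq Al] [DecidableEq W]
    (inp : X → Fin n → Al) (h : Al → Matrix (Option Al) (Option Al) ℂ) (x : X) :
    Matrix (Fin n × Option Al × W) (Fin n × Option Al × W) ℂ :=
  fun p q =>
    if p.1 = q.1 ∧ p.2.2 = q.2.2 then h (inp x p.1) p.2.1 q.2.1 else 0

/-!
Put `χ_x(t) = v_x φ_x(t)` and `f(t) = ∑_{x,y} Γ_{xy} ⟪χ_x(t), χ_y(t)⟫`; the quantity to bound is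
`f(T) - f(0)`. The driving Hamiltonian `H_D(t)` is the same for every input, so it drops out of
the derivative: `f'(t) = i α(t) ∑_{x,y} Γ_{xy} ⟪χ_x, (H_Q(x) - H_Q(y)) χ_y⟫`. The oracle acts
separately on each slice `(j, ·, w)` of the state, and on the slices with `x_j = y_j` the
contributions of `H_Q(x)` and `H_Q(y)` cancel, so block `(j, w)` contributes two bilinear forms of
`Γ ∘ Δ_j`, a matrix of norm at most one, in vectors no longer than the slices. Hence each block
contributes at most twice its squared mass, `|f'(t)| ≤ 2`, and the mean value theorem gives `2T`.
-/

open scoped InnerProductSpace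

section BilinearBound

variable {X κ : Type*} [Fintype X] [DecidableEq X] [Fintype κ]

lemma EuclideanSpace.inner_eq_sum (a b : EuclideanSpace ℂ κ) :
    ⟪a, b⟫_ℂ = ∑ k, conj (a k) * b k := by
  simp [PiLp.inner_apply, RCLike.inner_apply, mul_comm]

theorem norm_sum_mul_inner_le (M : Matrix X X ℂ) (a b : X → EuclideanSpace ℂ κ) :
    ‖∑ x, ∑ y, M x y * ⟪a x, b y⟫_ℂ‖ ≤
      matOpNorm M * (√(∑ x, ‖a x‖ ^ 2) * √(∑ y, ‖b y‖ ^ 2)) := by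
  let A : κ → EuclideanSpace ℂ X := fun k => WithLp.toLp 2 fun x => a x k
  let B : κ → EuclideanSpace ℂ X := fun k => WithLp.toLp 2 fun y => b y k
  have hsum : ∑ x, ∑ y, M x y * ⟪a x, b y⟫_ℂ =
      ∑ k, ⟪A k, Matrix.toEuclideanCLM (𝕜 := ℂ) M (B k)⟫_ℂ := by
    have happly : ∀ k x, Matrix.toEuclideanCLM (𝕜 := ℂ) M (B k) x = ∑ y, M x y * b y k :=
      fun _ _ => rfl
    simp only [EuclideanSpace.inner_eq_sum, happly, Finset.mul_sum]
    refine (Finset.sum_congr rfl fun x _ => Finset.sum_comm).trans (Finset.sum_comm.trans ?_)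
    exact Finset.sum_congr rfl fun k _ => Finset.sum_congr rfl fun x _ =>
      Finset.sum_congr rfl fun y _ => by ring
  have hA : ∑ k, ‖A k‖ ^ 2 = ∑ x, ‖a x‖ ^ 2 := by
    simp only [EuclideanSpace.norm_sq_eq]; exact Finset.sum_comm
  have hB : ∑ k, ‖B k‖ ^ 2 = ∑ y, ‖b y‖ ^ 2 := by
    simp only [EuclideanSpace.norm_sq_eq]; exact Finset.sum_comm
  rw [hsum, ← hA, ← hB]
  calc ‖∑ k, ⟪A k, Matrix.toEuclideanCLM (𝕜 := ℂ) M (B k)⟫_ℂ‖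
      ≤ ∑ k, ‖A k‖ * (matOpNorm M * ‖B k‖) :=
        (norm_sum_le _ _).trans <| Finset.sum_le_sum fun k _ =>
          (norm_inner_le_norm _ _).trans <|
            mul_le_mul_of_nonneg_left ((Matrix.toEuclideanCLM (𝕜 := ℂ) M).le_opNorm _)
              (norm_nonneg _)
    _ = matOpNorm M * ∑ k, ‖A k‖ * ‖B k‖ := by
        rw [Finset.mul_sum]; exact Finset.sum_congr rfl fun k _ => by ring
    _ ≤ _ := mul_le_mul_of_nonneg_left (Real.sum_mul_le_sqrt_mul_sqrt _ _ _) (norm_nonneg _)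

theorem norm_sum_mul_inner_le_sum_norm_sq {M : Matrix X X ℂ} (hM : matOpNorm M ≤ 1)
    {a b c : X → EuclideanSpace ℂ κ} (ha : ∀ x, ‖a x‖ ≤ ‖c x‖) (hb : ∀ x, ‖b x‖ ≤ ‖c x‖) :
    ‖∑ x, ∑ y, M x y * ⟪a x, b y⟫_ℂ‖ ≤ ∑ x, ‖c x‖ ^ 2 := by
  calc _ ≤ matOpNorm M * (√(∑ x, ‖a x‖ ^ 2) * √(∑ y, ‖b y‖ ^ 2)) := norm_sum_mul_inner_le M a b
    _ ≤ 1 * (√(∑ x, ‖c x‖ ^ 2) * √(∑ x, ‖c x‖ ^ 2)) := by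
        gcongr with x y
        exacts [ha x, hb y]
    _ = _ := by rw [one_mul, Real.mul_self_sqrt (by positivity)]

end BilinearBound

section Slices

variable {J C W : Type*} [Fintype J] [Fintype C] [Fintype W]

def slice (b : J × W) (u : EuclideanSpace ℂ (J × C × W)) : EuclideanSpace ℂ C :=
  WithLp.toLp 2 fun c => u (b.1, c, b.2)

theorem sum_norm_sq_slice (u : EuclideanSpace ℂ (J × C × W)) :
    ∑ b : J × W, ‖slice b u‖ ^ 2 = ‖u‖ ^ 2 := by
  simp only [EuclideanSpace.norm_sq_eq, slice, Fintype.sum_prod_type]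
  exact Finset.sum_congr rfl fun j _ => Finset.sum_comm

end Slices

section Oracle

variable {X Al W : Type*} [DecidableEq Al] [DecidableEq W] {n : ℕ}

theorem oracleHam_isHermitian (inp : X → Fin n → Al) {h : Al → Matrix (Option Al) (Option Al) ℂ}
    (hherm : ∀ y, (h y).IsHermitian) (x : X) : (oracleHam (W := W) inp h x).IsHermitian := by
  refine Matrix.IsHermitian.ext fun p q => ?_
  simp only [oracleHam]
  by_cases hpq : p.1 = q.1 ∧ p.2.2 = q.2.2
  · rw [if_pos ⟨hpq.1.symm, hpq.2.symm⟩, if_pos hpq, hpq.1]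
    exact (hherm (inp x q.1)).apply _ _
  · rw [if_neg fun h' => hpq ⟨h'.1.symm, h'.2.symm⟩, if_neg hpq, star_zero]

variable [Fintype Al] [Fintype W]

theorem toEuclideanCLM_oracleHam_apply (inp : X → Fin n → Al)
    (h : Al → Matrix (Option Al) (Option Al) ℂ) (z : X)
    (u : EuclideanSpace ℂ (Fin n × Option Al × W)) (p : Fin n × Option Al × W) :
    Matrix.toEuclideanCLM (𝕜 := ℂ) (oracleHam inp h z) u p =
      Matrix.toEuclideanCLM (𝕜 := ℂ) (h (inp z p.1)) (slice (p.1, p.2.2) u) p.2.1 := by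
  change ∑ q, oracleHam inp h z p q * u q = ∑ c, h (inp z p.1) p.2.1 c * u (p.1, c, p.2.2)
  simp [oracleHam, Fintype.sum_prod_type, ite_and, eq_comm]

theorem inner_toEuclideanCLM_oracleHam (inp : X → Fin n → Al)
    (h : Al → Matrix (Option Al) (Option Al) ℂ) (z : X)
    (u w : EuclideanSpace ℂ (Fin n × Option Al × W)) :
    ⟪u, Matrix.toEuclideanCLM (𝕜 := ℂ) (oracleHam inp h z) w⟫_ℂ =
      ∑ b : Fin n × W,
        ⟪slice b u, Matrix.toEuclideanCLM (𝕜 := ℂ) (h (inp z b.1)) (slice b w)⟫_ℂ := by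
  simp only [EuclideanSpace.inner_eq_sum, toEuclideanCLM_oracleHam_apply, Fintype.sum_prod_type]
  exact Finset.sum_congr rfl fun j _ => Finset.sum_comm

theorem isSymmetric_toEuclideanCLM_add_smul_oracleHam (inp : X → Fin n → Al)
    {h : Al → Matrix (Option Al) (Option Al) ℂ} (hherm : ∀ y, (h y).IsHermitian)
    {D : Matrix (Fin n × Option Al × W) (Fin n × Option Al × W) ℂ} (hD : D.IsHermitian)
    (a : ℝ) (x : X) :
    (Matrix.toEuclideanCLM (𝕜 := ℂ) (D + (a : ℂ) • oracleHam inp h x) :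
      EuclideanSpace ℂ (Fin n × Option Al × W) →ₗ[ℂ]
        EuclideanSpace ℂ (Fin n × Option Al × W)).IsSymmetric :=
  Matrix.isSymmetric_toEuclideanLin_iff.mpr <|
    hD.add ((oracleHam_isHermitian inp hherm x).smul (Complex.conj_ofReal a))

variable [Fintype X] [DecidableEq X]

theorem norm_sum_mul_inner_oracleHam_sub_le (inp : X → Fin n → Al)
    {h : Al → Matrix (Option Al) (Option Al) ℂ}
    (hherm : ∀ y, (h y).IsHermitian) (hbound : ∀ y, matOpNorm (h y) ≤ 1)
    {Γ : Matrix X X ℂ} (hΓ : ∀ j : Fin n, matOpNorm (Γ ⊙ Delta inp j) ≤ 1)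
    (χ : X → EuclideanSpace ℂ (Fin n × Option Al × W)) :
    ‖∑ x, ∑ y, Γ x y * ⟪χ x, Matrix.toEuclideanCLM (𝕜 := ℂ)
        (oracleHam inp h x - oracleHam inp h y) (χ y)⟫_ℂ‖ ≤
      2 * ∑ x, ‖χ x‖ ^ 2 := by
  let H : Al → EuclideanSpace ℂ (Option Al) →L[ℂ] EuclideanSpace ℂ (Option Al) :=
    fun a => Matrix.toEuclideanCLM (𝕜 := ℂ) (h a)
  have hH : ∀ a u, ‖H a u‖ ≤ ‖u‖ := fun a u =>
    ((H a).le_opNorm u).trans (mul_le_of_le_one_left (norm_nonneg u) (hbound a))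
  have hHsymm : ∀ a u w, ⟪H a u, w⟫_ℂ = ⟪u, H a w⟫_ℂ := fun a =>
    Matrix.isSymmetric_toEuclideanLin_iff.mpr (hherm a)
  -- on a block with `x_j = y_j` the two terms cancel, which is what lets `Δ_j` in
  have hentry : ∀ x y, Γ x y * ⟪χ x, Matrix.toEuclideanCLM (𝕜 := ℂ)
        (oracleHam inp h x - oracleHam inp h y) (χ y)⟫_ℂ =
      ∑ b : Fin n × W,
        ((Γ ⊙ Delta inp b.1) x y * ⟪H (inp x b.1) (slice b (χ x)), slice b (χ y)⟫_ℂ -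
          (Γ ⊙ Delta inp b.1) x y * ⟪slice b (χ x), H (inp y b.1) (slice b (χ y))⟫_ℂ) := by
    intro x y
    rw [map_sub, sub_apply, inner_sub_right, inner_toEuclideanCLM_oracleHam,
      inner_toEuclideanCLM_oracleHam, ← Finset.sum_sub_distrib, Finset.mul_sum]
    refine Finset.sum_congr rfl fun b _ => ?_
    by_cases hxy : inp x b.1 = inp y b.1
    · simp [Delta, hxy]
    · simp [Delta, hxy, hHsymm, H, mul_sub]
  calc _ = ‖∑ b : Fin n × W,
        (∑ x, ∑ y, (Γ ⊙ Delta inp b.1) x y * ⟪H (inp x b.1) (slice b (χ x)), slice b (χ y)⟫_ℂ -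
          ∑ x, ∑ y, (Γ ⊙ Delta inp b.1) x y *
            ⟪slice b (χ x), H (inp y b.1) (slice b (χ y))⟫_ℂ)‖ := by
        have hswap : ∀ f : X → X → Fin n × W → ℂ,
            ∑ x, ∑ y, ∑ b, f x y b = ∑ b, ∑ x, ∑ y, f x y b := fun f =>
          (Finset.sum_congr rfl fun x _ => Finset.sum_comm).trans Finset.sum_comm
        simp only [hentry, Finset.sum_sub_distrib]
        rw [hswap, hswap]
    _ ≤ ∑ b : Fin n × W, (∑ x, ‖slice b (χ x)‖ ^ 2 + ∑ x, ‖slice b (χ x)‖ ^ 2) :=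
        (norm_sum_le _ _).trans <| Finset.sum_le_sum fun b _ => (norm_sub_le _ _).trans <|
          add_le_add
            (norm_sum_mul_inner_le_sum_norm_sq (hΓ b.1) (fun x => hH _ _) (fun _ => le_rfl))
            (norm_sum_mul_inner_le_sum_norm_sq (hΓ b.1) (fun _ => le_rfl) (fun x => hH _ _))
    _ = 2 * ∑ x, ‖χ x‖ ^ 2 := by
        simp only [← two_mul, ← Finset.mul_sum]
        rw [Finset.sum_comm]
        simp only [sum_norm_sq_slice]

theorem norm_sum_mul_inner_queryHam_sub_le (inp : X → Fin n → Al)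
    {h : Al → Matrix (Option Al) (Option Al) ℂ}
    (hherm : ∀ y, (h y).IsHermitian) (hbound : ∀ y, matOpNorm (h y) ≤ 1)
    {Γ : Matrix X X ℂ} (hΓ : ∀ j : Fin n, matOpNorm (Γ ⊙ Delta inp j) ≤ 1)
    (D : Matrix (Fin n × Option Al × W) (Fin n × Option Al × W) ℂ) {a : ℝ} (ha : |a| ≤ 1)
    (χ : X → EuclideanSpace ℂ (Fin n × Option Al × W)) :
    ‖∑ x, ∑ y, Γ x y *
        ⟪χ x, (Matrix.toEuclideanCLM (𝕜 := ℂ) (D + (a : ℂ) • oracleHam inp h x) -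
          Matrix.toEuclideanCLM (𝕜 := ℂ) (D + (a : ℂ) • oracleHam inp h y) : _ →L[ℂ] _) (χ y)⟫_ℂ‖ ≤
      2 * ∑ x, ‖χ x‖ ^ 2 := by
  simp only [← map_sub, add_sub_add_left_eq_sub, ← smul_sub, map_smul, smul_apply,
    inner_smul_right, mul_left_comm (Γ _ _), ← Finset.mul_sum, norm_mul, Complex.norm_real,
    Real.norm_eq_abs]
  exact (mul_le_of_le_one_left (norm_nonneg _) ha).trans
    (norm_sum_mul_inner_oracleHam_sub_le inp hherm hbound hΓ χ)

end Oracle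

section Schrodinger

variable {E : Type*} [NormedAddCommGroup E] [InnerProductSpace ℂ E]

theorem HasDerivWithinAt.inner_of_schrodinger {ψ₁ ψ₂ : ℝ → E} {A B : E →L[ℂ] E}
    (hA : (A : E →ₗ[ℂ] E).IsSymmetric) {s : Set ℝ} {t : ℝ}
    (h₁ : HasDerivWithinAt ψ₁ ((-Complex.I) • A (ψ₁ t)) s t)
    (h₂ : HasDerivWithinAt ψ₂ ((-Complex.I) • B (ψ₂ t)) s t) :
    HasDerivWithinAt (fun t => ⟪ψ₁ t, ψ₂ t⟫_ℂ) (Complex.I * ⟪ψ₁ t, (A - B) (ψ₂ t)⟫_ℂ) s t := by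
  refine (h₁.inner ℂ h₂).congr_deriv ?_
  have hAsymm : ⟪A (ψ₁ t), ψ₂ t⟫_ℂ = ⟪ψ₁ t, A (ψ₂ t)⟫_ℂ := hA (ψ₁ t) (ψ₂ t)
  rw [inner_smul_left, inner_smul_right, hAsymm, sub_apply, inner_sub_right]
  simp only [neg_mul, map_neg, Complex.conj_I, neg_neg]
  ring

theorem HasDerivWithinAt.sum_mul_inner_of_schrodinger {X : Type*} [Fintype X]
    (Γ : Matrix X X ℂ) {ψ : X → ℝ → E} {A : X → E →L[ℂ] E}
    (hA : ∀ x, (A x : E →ₗ[ℂ] E).IsSymmetric) {s : Set ℝ} {t : ℝ}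
    (hψ : ∀ x, HasDerivWithinAt (ψ x) ((-Complex.I) • A x (ψ x t)) s t) :
    HasDerivWithinAt (fun t => ∑ x, ∑ y, Γ x y * ⟪ψ x t, ψ y t⟫_ℂ)
      (Complex.I * ∑ x, ∑ y, Γ x y * ⟪ψ x t, (A x - A y) (ψ y t)⟫_ℂ) s t := by
  refine (HasDerivWithinAt.fun_sum fun x _ => HasDerivWithinAt.fun_sum fun y _ =>
    ((hψ x).inner_of_schrodinger (hA x) (hψ y)).const_mul (Γ x y)).congr_deriv ?_
  simp only [Finset.mul_sum]
  exact Finset.sum_congr rfl fun x _ => Finset.sum_congr rfl fun y _ => by ring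

end Schrodinger

theorem trace_conjTranspose_hadamard_sub_mul_vecMulVec {X E : Type*} [Fintype X]
    [NormedAddCommGroup E] [InnerProductSpace ℂ E] {Γ σ ρ : Matrix X X ℂ} (hΓ : Γ.IsHermitian)
    {a b : X → E} (hσ : ∀ x y, σ x y = ⟪a x, a y⟫_ℂ) (hρ : ∀ x y, ρ x y = ⟪b x, b y⟫_ℂ)
    (v : X → ℂ) :
    ((Γ ⊙ (σ - ρ))ᴴ * Matrix.vecMulVec v (star v)).trace =
      ∑ x, ∑ y, Γ x y * ⟪v x • a x, v y • a y⟫_ℂ - ∑ x, ∑ y, Γ x y * ⟪v x • b x, v y • b y⟫_ℂ := by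
  simp only [Matrix.trace, Matrix.diag_apply, Matrix.mul_apply, ← Finset.sum_sub_distrib]
  refine Finset.sum_congr rfl fun x _ => Finset.sum_congr rfl fun y _ => ?_
  simp only [Matrix.conjTranspose_apply, Matrix.hadamard_apply, Matrix.sub_apply, hσ, hρ,
    star_mul', star_sub, hΓ.apply x y, Matrix.vecMulVec_apply, Pi.star_apply, RCLike.star_def,
    inner_conj_symm, inner_smul_left, inner_smul_right]
  ring

theorem stmt0
    {Al W : Type*} [Fintype Al] [DecidableEq Al] [Fintype W] [DecidableEq W]
    {n : ℕ}
    {X : Type*} [Fintype X] [DecidableEq X] (inp : X → Fin n → Al)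
    (T : ℝ) (hT : 0 ≤ T)
    (h : Al → Matrix (Option Al) (Option Al) ℂ)
    (hherm : ∀ y, (h y).IsHermitian) (hbound : ∀ y, matOpNorm (h y) ≤ 1)
    (HD : ℝ → Matrix (Fin n × Option Al × W) (Fin n × Option Al × W) ℂ)
    (hHDherm : ∀ t, (HD t).IsHermitian)
    (α : ℝ → ℝ) (hα : ∀ t ∈ Set.Icc 0 T, |α t| ≤ 1)
    (φ : X → ℝ → EuclideanSpace ℂ (Fin n × Option Al × W))
    (hunit : ∀ x, ∀ t ∈ Set.Icc 0 T, ‖φ x t‖ = 1)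
    (hschro : ∀ x, ∀ t ∈ Set.Icc 0 T,
      HasDerivWithinAt (φ x)
        ((-Complex.I) •
          (Matrix.toEuclideanCLM (𝕜 := ℂ)
            (HD t + (α t : ℂ) • oracleHam inp h x) (φ x t)))
        (Set.Icc 0 T) t)
    -- the initial and final Gram matrices
    (ρ σ : Matrix X X ℂ)
    (hρ : ∀ x y, ρ x y = inner ℂ (φ x 0) (φ y 0))
    (hσ : ∀ x y, σ x y = inner ℂ (φ x T) (φ y T)) :
    ∀ Γ : Matrix X X ℂ, Γ.IsHermitian →
      (∀ j : Fin n, matOpNorm (Γ ⊙ Delta inp j) ≤ 1) →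
      ∀ v : X → ℂ, (∑ x, ‖v x‖ ^ 2 = 1) →
        ‖((Γ ⊙ (σ - ρ)).conjTranspose * Matrix.vecMulVec v (star v)).trace‖
          ≤ 2 * T := by
  intro Γ hΓ hΓΔ v hv
  let χ : X → ℝ → EuclideanSpace ℂ (Fin n × Option Al × W) := fun x t => v x • φ x t
  have hχ : ∀ x, ∀ t ∈ Set.Icc 0 T, HasDerivWithinAt (χ x) ((-Complex.I) •
      Matrix.toEuclideanCLM (𝕜 := ℂ) (HD t + (α t : ℂ) • oracleHam inp h x) (χ x t))
      (Set.Icc 0 T) t := fun x t ht =>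
    ((hschro x t ht).const_smul (v x)).congr_deriv (by rw [map_smul, smul_comm])
  have hderiv := fun t ht => HasDerivWithinAt.sum_mul_inner_of_schrodinger Γ
    (isSymmetric_toEuclideanCLM_add_smul_oracleHam inp hherm (hHDherm t) (α t)) (hχ · t ht)
  have hχ_norm : ∀ t ∈ Set.Icc 0 T, ∑ x, ‖χ x t‖ ^ 2 = 1 := fun t ht => by
    rw [← hv]
    exact Finset.sum_congr rfl fun x _ => by rw [norm_smul, hunit x t ht, mul_one]
  rw [trace_conjTranspose_hadamard_sub_mul_vecMulVec hΓ hσ hρ]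
  refine ((convex_Icc 0 T).norm_image_sub_le_of_norm_hasDerivWithin_le (C := 2) hderiv
    (fun t ht => ?_) ⟨le_rfl, hT⟩ ⟨hT, le_rfl⟩).trans_eq (by simp [abs_of_nonneg hT])
  rw [norm_mul, Complex.norm_I, one_mul]
  exact (norm_sum_mul_inner_queryHam_sub_le inp hherm hbound hΓΔ (HD t) (hα t ht) (χ · t)).trans_eq
    (by rw [hχ_norm t ht, mul_one])
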